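/- Let α and β be real numbers. In the ring of formal power series in u over ℝ, one has Σ_{n=0}^{∞} C(α+nβ, n) u^n = x^{α+1} / ((1-β)x + β), where x = x(u) is the unique formal power series with constant term 1 satisfying (x-1)/x^β = u; equivalently, the substitution u = (x-1)/x^β into the left side yields x^{α+1}/((1-β)x+β) as formal power series in x-1. -/

import Mathlib

open Finset PowerSeries

/-- Generalized binomial coefficient `C(x, k) = x(x-1)⋯(x-k+1)/k!` for real `x`. -/
noncomputable def gchoose (x : ℝ) (k : ℕ) : ℝ :=
  (∏ i ∈ Finset.range k, (x - i)) / (Nat.factorial k)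

/-- The binomial series `(1+t)^x = Σ C(x,k) t^k` as a formal power series. -/
noncomputable def binomSeries (x : ℝ) : PowerSeries ℝ :=
  PowerSeries.mk fun k => gchoose x k

/-!
With `u = t (1 + t)^(-β)`, the coefficient of `t^m` on the left is
`∑ₙ C(α + nβ, n) C(-nβ, m - n)`, a case of Gould's convolution
`∑ₖ C(x + kz, k) C(y + (m - k)z, m - k)`. Splitting off
`C(x + kz, k) = x/(x + kz) C(x + kz, k) + z C(x + kz - 1, k - 1)` reduces the convolution
to the Rothe–Hagen identity
`∑ₖ x/(x + kz) C(x + kz, k) C(y + (m - k)z, m - k) = C(x + y + mz, m)` and a recursion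
in `m`, which the coefficients of `(1 + t)^(w + 1) / (1 + (1 - z)t)` also satisfy.
Both sides of the Rothe–Hagen identity are polynomials in `x` with the same difference under
`x ↦ x + 1` (Pascal's rule), so they differ by a periodic polynomial, i.e. a constant, and at
`x = 0` all weights but the first vanish.
-/

section BinomialRing

variable {R : Type*} [CommRing R] [BinomialRing R]

/-- `x / (x + k z) * C(x + k z, k)`, written without division. -/
noncomputable def rotheWeight (z x : R) : ℕ → R
  | 0 => 1
  | k + 1 => Ring.choose (x + (k + 1) * z) (k + 1) - z * Ring.choose (x + (k + 1) * z - 1) k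

@[simp]
theorem rotheWeight_zero (z x : R) : rotheWeight z x 0 = 1 := rfl

theorem rotheWeight_zero_left (z : R) (k : ℕ) : rotheWeight z 0 (k + 1) = 0 := by
  have := BinomialRing.toIsAddTorsionFree (R := R)
  have h := Ring.choose_smul_choose ((k + 1) * z : R) (n := k + 1) (k := 1) (by omega)
  rw [Nat.choose_one_right, Ring.choose_one_right, Nat.cast_one, Nat.add_sub_cancel] at h
  rw [rotheWeight, zero_add, sub_eq_zero]
  refine nsmul_right_injective k.succ_ne_zero ?_
  dsimp only
  rw [h, nsmul_eq_mul]
  push_cast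
  ring

theorem rotheWeight_add_one_sub (z x : R) (k : ℕ) :
    rotheWeight z (x + 1) (k + 1) - rotheWeight z x (k + 1) = rotheWeight z (x + z) k := by
  cases k with
  | zero => simp [rotheWeight]
  | succ k =>
    set a := x + (k + 2) * z
    have hpascal := Ring.choose_succ_succ (a - 1) k
    rw [sub_add_cancel] at hpascal
    simp only [rotheWeight]
    push_cast
    rw [show x + 1 + (k + 1 + 1) * z = a + 1 by ring, add_sub_cancel_right,
      show x + (k + 1 + 1) * z = a by ring, show x + z + (k + 1) * z = a by ring,
      Ring.choose_succ_succ, hpascal]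
    ring

theorem map_rotheWeight {S : Type*} [CommRing S] [BinomialRing S] (f : R →+* S) (z x : R)
    (k : ℕ) : f (rotheWeight z x k) = rotheWeight (f z) (f x) k := by
  cases k <;> simp [rotheWeight, Ring.map_choose]

noncomputable def rotheSum (z x y : R) (m : ℕ) : R :=
  ∑ k ∈ range (m + 1), rotheWeight z x k * Ring.choose (y + (m - k : ℕ) * z) (m - k)

theorem rotheSum_zero_left (z y : R) (m : ℕ) : rotheSum z 0 y m = Ring.choose (y + m * z) m := by
  simp [rotheSum, sum_range_succ', rotheWeight_zero_left]

theorem rotheSum_add_one_sub (z x y : R) (m : ℕ) :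
    rotheSum z (x + 1) y (m + 1) - rotheSum z x y (m + 1) = rotheSum z (x + z) y m := by
  simp only [rotheSum, ← sum_sub_distrib, ← sub_mul]
  rw [sum_range_succ']
  simp only [rotheWeight_zero, sub_self, zero_mul, add_zero, rotheWeight_add_one_sub,
    Nat.add_sub_add_right]

theorem map_rotheSum {S : Type*} [CommRing S] [BinomialRing S] (f : R →+* S) (z x y : R)
    (m : ℕ) : f (rotheSum z x y m) = rotheSum (f z) (f x) (f y) m := by
  simp [rotheSum, map_rotheWeight, Ring.map_choose]

noncomputable def gouldSum (z x y : R) (m : ℕ) : R :=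
  ∑ k ∈ range (m + 1), Ring.choose (x + k * z) k * Ring.choose (y + (m - k : ℕ) * z) (m - k)

theorem gouldSum_succ (z x y : R) (m : ℕ) :
    gouldSum z x y (m + 1) = rotheSum z x y (m + 1) + z * gouldSum z (x + z - 1) y m := by
  conv_lhs => rw [gouldSum, sum_range_succ']
  conv_rhs => rw [rotheSum, sum_range_succ', gouldSum, mul_sum, add_right_comm, ← sum_add_distrib]
  congr 1
  · refine sum_congr rfl fun k _ => ?_
    rw [rotheWeight, Nat.add_sub_add_right,
      show x + z - 1 + k * z = x + ((k + 1 : ℕ) : R) * z - 1 by push_cast; ring]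
    push_cast
    ring
  · simp

end BinomialRing

theorem Polynomial.eval_eq_eval_zero_of_eval_add_one {R : Type*} [CommRing R] [IsDomain R]
    [CharZero R] (p : Polynomial R) (hp : ∀ x, p.eval (x + 1) = p.eval x) (x : R) :
    p.eval x = p.eval 0 := by
  have hnat : ∀ n : ℕ, p.eval (n : R) = p.eval 0 := by
    intro n
    induction n with
    | zero => simp
    | succ n ih => rw [Nat.cast_succ, hp, ih]
  have hconst : p - Polynomial.C (p.eval 0) = 0 := by
    apply Polynomial.eq_zero_of_infinite_isRoot
    refine Set.infinite_of_injective_forall_mem Nat.cast_injective fun n => ?_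
    simp [hnat n]
  simpa [sub_eq_zero] using congrArg (Polynomial.eval x) hconst

theorem rotheSum_eq_choose {K : Type*} [Field K] [CharZero K] (z x y : K) (m : ℕ) :
    rotheSum z x y m = Ring.choose (x + y + m * z) m := by
  induction m generalizing x with
  | zero => simp [rotheSum]
  | succ m ih =>
    set p : Polynomial K := rotheSum (Polynomial.C z) Polynomial.X (Polynomial.C y) (m + 1) -
      Ring.choose (Polynomial.X + Polynomial.C y + ((m + 1 : ℕ) : Polynomial K) * Polynomial.C z)
        (m + 1)
    have heval : ∀ t, p.eval t =
        rotheSum z t y (m + 1) - Ring.choose (t + y + (m + 1 : ℕ) * z) (m + 1) := by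
      intro t
      rw [← Polynomial.coe_evalRingHom, map_sub, map_rotheSum, Ring.map_choose]
      simp
    have hperiodic : ∀ t, p.eval (t + 1) = p.eval t := by
      intro t
      rw [heval, heval, sub_eq_sub_iff_sub_eq_sub, rotheSum_add_one_sub, ih,
        show t + 1 + y + (m + 1 : ℕ) * z = t + y + (m + 1 : ℕ) * z + 1 by ring,
        Ring.choose_succ_succ, add_sub_cancel_right]
      push_cast
      ring_nf
    have := p.eval_eq_eval_zero_of_eval_add_one hperiodic x
    rw [heval, heval, rotheSum_zero_left, zero_add] at this
    simpa [sub_eq_zero] using this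

theorem PowerSeries.binomialSeries_pow {R A : Type*} [CommRing R] [BinomialRing R] [Ring A]
    [Algebra R A] (r : R) (n : ℕ) : binomialSeries A r ^ n = binomialSeries A (n * r) := by
  induction n with
  | zero => simp
  | succ n ih => rw [pow_succ, ih, ← binomialSeries_add, Nat.cast_succ, add_one_mul]

section BinomialSeries

variable {K : Type*} [Field K] [CharZero K]

theorem PowerSeries.inv_binomialSeries (r : K) :
    (binomialSeries K r)⁻¹ = binomialSeries K (-r) := by
  rw [PowerSeries.inv_eq_iff_mul_eq_one (by simp), ← binomialSeries_add, neg_add_cancel,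
    binomialSeries_zero]

theorem coeff_succ_binomialSeries_mul_inv (z w : K) (m : ℕ) :
    coeff (m + 1) (binomialSeries K (w + 1) * (1 + C (1 - z) * X)⁻¹) =
      Ring.choose w (m + 1) + z * coeff m (binomialSeries K w * (1 + C (1 - z) * X)⁻¹) := by
  have hinv : (1 + C (1 - z) * X) * (1 + C (1 - z) * X)⁻¹ = 1 :=
    PowerSeries.mul_inv_cancel _ (by simp)
  have hsplit : binomialSeries K (w + 1) * (1 + C (1 - z) * X)⁻¹ =
      binomialSeries K w + C z * X * (binomialSeries K w * (1 + C (1 - z) * X)⁻¹) := by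
    have hone : binomialSeries K (1 : K) = 1 + X := by
      simpa using binomialSeries_nat (R := K) (A := K) 1
    rw [binomialSeries_add, hone, map_sub, map_one]
    rw [map_sub, map_one] at hinv
    linear_combination (binomialSeries K w) * hinv
  rw [hsplit, map_add, binomialSeries_coeff, smul_eq_mul, mul_one, mul_assoc, coeff_C_mul,
    coeff_succ_X_mul]

theorem gouldSum_eq_coeff (z x y : K) (m : ℕ) :
    gouldSum z x y m =
      coeff m (binomialSeries K (x + y + m * z + 1) * (1 + C (1 - z) * X)⁻¹) := by
  induction m generalizing x with
  | zero => simp [gouldSum]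
  | succ m ih =>
    rw [gouldSum_succ, rotheSum_eq_choose, ih, coeff_succ_binomialSeries_mul_inv]
    push_cast
    ring_nf

end BinomialSeries

theorem gchoose_eq_choose (x : ℝ) (k : ℕ) : gchoose x k = Ring.choose x k := by
  rw [gchoose, Ring.choose_eq_smul, ← Polynomial.aeval_eq_smeval, Polynomial.aeval_def,
    Polynomial.eval₂_eq_eval_map, descPochhammer_map, descPochhammer_eval_eq_prod_range,
    smul_eq_mul, div_eq_inv_mul]

theorem binomSeries_eq_binomialSeries (x : ℝ) :
    binomSeries x = PowerSeries.binomialSeries ℝ x := by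
  ext k
  simp [binomSeries, gchoose_eq_choose]

/-- The infinite sum is read coefficientwise: `uⁿ` has order `n`, so only `n ≤ m` contributes
to the coefficient of `t^m`. -/
theorem gould_lambert_identity (α β : ℝ) (m : ℕ) :
    ∑ n ∈ Finset.range (m + 1),
        gchoose (α + n * β) n *
          PowerSeries.coeff m ((PowerSeries.X * (binomSeries β)⁻¹) ^ n) =
      PowerSeries.coeff m
        (binomSeries (α + 1) * (1 + PowerSeries.C (1 - β) * PowerSeries.X)⁻¹) := by
  have hcoeff : ∀ n ∈ range (m + 1), coeff m ((X * (binomSeries β)⁻¹) ^ n) =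
      Ring.choose (-(m * β) + (m - n : ℕ) * β) (m - n) := by
    intro n hn
    have hnm : n ≤ m := Nat.lt_succ_iff.mp (mem_range.mp hn)
    rw [binomSeries_eq_binomialSeries, inv_binomialSeries, mul_pow, binomialSeries_pow,
      coeff_X_pow_mul', if_pos hnm, binomialSeries_coeff, smul_eq_mul, mul_one, Nat.cast_sub hnm]
    ring_nf
  rw [sum_congr rfl fun n hn => by rw [hcoeff n hn, gchoose_eq_choose], ← gouldSum,
    gouldSum_eq_coeff, binomSeries_eq_binomialSeries]
  ring_nf
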